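/- Let k be a field of prime characteristic p containing an element ζ that is a primitive (p−1)-th root of unity. Let σ and ρ be k-algebra automorphisms of the rational function field k(X) = RatFunc k with σ(X) = X + 1 and ρ(X) = ζ⁻¹·X. Then (ρ ∘ σ ∘ ρ⁻¹)(X) = X + ζ, the subgroup H of the k-automorphism group of RatFunc k generated by {σ, ρ} is finite of order p·(p−1), and the fixed field of H equals the intermediate field generated by (X^p − X)^{p−1}; that is, IntermediateField.fixedField H = IntermediateField.adjoin k {(X^p − X)^{p−1}}. -/

import Mathlib

open Polynomial IntermediateField Module

/-!
Both generators fix `y = (X^p - X)^(p-1)`: `σ` because Frobenius makes `X^p - X` invariant under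
`X ↦ X + 1`, and `ρ` because it scales `X^p - X` by `ζ⁻¹`, whose `(p-1)`-th power is `1`.
Now `[k(X) : k(y)] = deg y = p(p-1)`, while `σ` and `ρ` have coprime orders `p` and `p-1`; with
Artin's theorem `[k(X) : k(X)^H] = |H|` this gives
`p(p-1) ∣ |H| = [k(X) : k(X)^H] ≤ [k(X) : k(y)] = p(p-1)`, so equality holds throughout.
-/

namespace IntermediateField

variable {F E : Type*} [Field F] [Field E] [Algebra F E]

theorem mem_fixedField_closure_iff {S : Set (E ≃ₐ[F] E)} {x : E} :
    x ∈ fixedField (Subgroup.closure S) ↔ ∀ g ∈ S, g x = x := by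
  rw [mem_fixedField_iff]
  exact Subgroup.closure_le (MulAction.stabilizer _ x)

theorem finite_of_le_fixedField {H : Subgroup (E ≃ₐ[F] E)} {K : IntermediateField F E}
    [FiniteDimensional K E] (hK : K ≤ fixedField H) : Finite H :=
  have : Finite (fixingSubgroup K) := .of_equiv _ (fixingSubgroupEquiv K).toEquiv.symm
  Finite.of_injective _ (Subgroup.inclusion_injective ((le_iff_le H K).mp hK))

theorem finrank_fixedField_eq_natCard (H : Subgroup (E ≃ₐ[F] E)) [Finite H] :
    finrank (fixedField H) E = Nat.card H := by
  have := Fintype.ofFinite H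
  rw [Nat.card_eq_fintype_card]
  exact FixedPoints.finrank_eq_card H E

theorem fixedField_eq_of_le_of_finrank_le {H : Subgroup (E ≃ₐ[F] E)} {K : IntermediateField F E}
    [FiniteDimensional K E] (hK : K ≤ fixedField H) (hcard : finrank K E ≤ Nat.card H) :
    fixedField H = K := by
  have := finite_of_le_fixedField hK
  refine (eq_of_le_of_finrank_le' hK ?_).symm
  rwa [finrank_fixedField_eq_natCard]

end IntermediateField

theorem Subgroup.mul_dvd_natCard_closure_pair {G : Type*} [Group G] {a b : G}
    (h : (orderOf a).Coprime (orderOf b)) : orderOf a * orderOf b ∣ Nat.card (closure {a, b}) :=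
  h.mul_dvd_of_dvd_of_dvd (orderOf_dvd_natCard _ (subset_closure (Set.mem_insert a {b})))
    (orderOf_dvd_natCard _ (subset_closure (Set.mem_insert_of_mem a rfl)))

namespace RatFunc

variable {K : Type*} [Field K]

theorem algHom_ext {L : Type*} [Field L] [Algebra K L] {f g : RatFunc K →ₐ[K] L}
    (h : f X = g X) : f = g := by
  refine AlgHom.coe_ringHom_injective (IsFractionRing.ringHom_ext (A := K[X]) fun q => ?_)
  have := Polynomial.algHom_ext (f := f.comp (IsScalarTower.toAlgHom K K[X] _))
    (g := g.comp (IsScalarTower.toAlgHom K K[X] _)) (by simpa using h)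
  exact congr($this q)

theorem algEquiv_ext {f g : RatFunc K ≃ₐ[K] RatFunc K} (h : f X = g X) : f = g :=
  AlgEquiv.coe_toAlgHom_injective (algHom_ext h)

theorem finrank_adjoin_algebraMap (q : K[X]) :
    finrank K⟮algebraMap K[X] (RatFunc K) q⟯ (RatFunc K) = q.natDegree := by
  simp [finrank_eq_max_natDegree, num_algebraMap, denom_algebraMap]

theorem finrank_adjoin_X_pow_sub_X_pow {n : ℕ} (hn : 1 < n) (m : ℕ) :
    finrank K⟮((X : RatFunc K) ^ n - X) ^ m⟯ (RatFunc K) = n * m := by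
  rw [show ((X : RatFunc K) ^ n - X) ^ m = algebraMap K[X] _ ((.X ^ n - .X) ^ m) by simp,
    finrank_adjoin_algebraMap, natDegree_pow, FiniteField.X_pow_card_sub_X_natDegree_eq _ hn,
    mul_comm]

@[simp]
theorem algEquiv_apply_C (f : RatFunc K ≃ₐ[K] RatFunc K) (c : K) : f (C c) = C c := by
  rw [← algebraMap_eq_C, f.commutes]

variable {σ ρ : RatFunc K ≃ₐ[K] RatFunc K} {a b : K}

theorem pow_apply_X_of_apply_X_eq_X_add_C (h : σ X = X + C a) (n : ℕ) :
    (σ ^ n) X = X + C (n * a) := by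
  induction n with
  | zero => simp
  | succ n ih =>
    rw [pow_succ', AlgEquiv.mul_apply, ih, map_add, h, algEquiv_apply_C, add_assoc, ← map_add,
      Nat.cast_succ, add_one_mul, add_comm a]

theorem pow_apply_X_of_apply_X_eq_C_mul_X (h : ρ X = C a * X) (n : ℕ) :
    (ρ ^ n) X = C (a ^ n) * X := by
  induction n with
  | zero => simp
  | succ n ih =>
    rw [pow_succ', AlgEquiv.mul_apply, ih, map_mul, h, algEquiv_apply_C, ← mul_assoc, ← map_mul,
      pow_succ]

theorem orderOf_eq_of_apply_X_eq_X_add_C {p : ℕ} [CharP K p] (hp : p.Prime) (ha : a ≠ 0)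
    (h : σ X = X + C a) : orderOf σ = p := by
  have := Fact.mk hp
  refine orderOf_eq_prime (algEquiv_ext ?_) fun h1 => ha ?_
  · rw [pow_apply_X_of_apply_X_eq_X_add_C h, CharP.cast_eq_zero, zero_mul, map_zero, add_zero,
      AlgEquiv.one_apply]
  · rwa [h1, AlgEquiv.one_apply, left_eq_add, map_eq_zero] at h

theorem orderOf_eq_orderOf_of_apply_X_eq_C_mul_X (h : ρ X = C a * X) : orderOf ρ = orderOf a := by
  refine orderOf_eq_orderOf_iff.mpr fun n => ?_
  calc ρ ^ n = 1 ↔ (ρ ^ n) X = X := ⟨fun h1 => by rw [h1, AlgEquiv.one_apply],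
      fun h1 => algEquiv_ext (h1.trans (AlgEquiv.one_apply X).symm)⟩
    _ ↔ C (a ^ n) * X = C 1 * X := by rw [pow_apply_X_of_apply_X_eq_C_mul_X h, map_one, one_mul]
    _ ↔ a ^ n = 1 := by rw [mul_left_inj' X_ne_zero, C_injective.eq_iff]

theorem inv_apply_X_of_apply_X_eq_C_mul_X (ha : a ≠ 0) (h : ρ X = C a * X) :
    ρ⁻¹ X = C a⁻¹ * X := by
  apply ρ.injective
  rw [show ρ (ρ⁻¹ X) = X from ρ.apply_symm_apply X, map_mul, h, algEquiv_apply_C,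
    ← mul_assoc, ← map_mul, inv_mul_cancel₀ ha, map_one, one_mul]

theorem conj_apply_X_of_apply_X_eq (ha : a ≠ 0) (hσ : σ X = X + C b) (hρ : ρ X = C a * X) :
    (ρ * σ * ρ⁻¹) X = X + C (a⁻¹ * b) := by
  rw [AlgEquiv.mul_apply, AlgEquiv.mul_apply, inv_apply_X_of_apply_X_eq_C_mul_X ha hρ]
  simp only [map_mul, map_add, algEquiv_apply_C, hσ, hρ]
  rw [mul_add, ← mul_assoc, ← map_mul, inv_mul_cancel₀ ha, map_one, one_mul, ← map_mul]

theorem apply_X_pow_sub_X_of_apply_X_eq_X_add_C {p : ℕ} [CharP K p] (hp : p.Prime)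
    (ha : a ^ p = a) (h : σ X = X + C a) : σ (X ^ p - X) = X ^ p - X := by
  have := Fact.mk hp
  rw [map_sub, map_pow, h, add_pow_char, ← map_pow, ha]
  ring

theorem apply_X_pow_sub_X_pow_of_apply_X_eq_C_mul_X {n : ℕ} (hn : 0 < n) (ha : a ^ (n - 1) = 1)
    (h : ρ X = C a * X) : ρ ((X ^ n - X) ^ (n - 1)) = (X ^ n - X) ^ (n - 1) := by
  obtain ⟨m, rfl⟩ : ∃ m, n = m + 1 := ⟨n - 1, by omega⟩
  rw [Nat.add_sub_cancel] at ha ⊢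
  calc ρ ((X ^ (m + 1) - X) ^ m) = (C a * (X ^ (m + 1) - X)) ^ m := by
        rw [map_pow, map_sub, map_pow, h, mul_pow, ← map_pow, pow_succ, ha, one_mul, mul_sub]
    _ = (X ^ (m + 1) - X) ^ m := by rw [mul_pow, ← map_pow, ha, map_one, one_mul]

end RatFunc

/-- §4.1 of the paper: with `σ(X) = X + 1` and `ρ(X) = ζ⁻¹·X` for a primitive
`(p-1)`-th root of unity `ζ`, one has `ρσρ⁻¹(X) = X + ζ`, the group
`H = ⟨σ, ρ⟩` has order `p(p-1)`, and its fixed field is `k((X^p - X)^{p-1})`. -/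
theorem fixedField_closure_sigma_rho
    (k : Type*) [Field k] (p : ℕ) (hp : p.Prime) [CharP k p]
    (ζ : k) (hζ : IsPrimitiveRoot ζ (p - 1))
    (σ ρ : RatFunc k ≃ₐ[k] RatFunc k)
    (hσ : σ RatFunc.X = RatFunc.X + 1)
    (hρ : ρ RatFunc.X = RatFunc.C ζ⁻¹ * RatFunc.X) :
    (ρ * σ * ρ⁻¹) RatFunc.X = RatFunc.X + RatFunc.C ζ ∧
    Nat.card (Subgroup.closure {σ, ρ} : Subgroup (RatFunc k ≃ₐ[k] RatFunc k))
      = p * (p - 1) ∧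
    IntermediateField.fixedField (Subgroup.closure {σ, ρ}) =
      IntermediateField.adjoin k {(RatFunc.X ^ p - RatFunc.X) ^ (p - 1)} := by
  have hp1 := hp.one_lt
  rw [← map_one RatFunc.C] at hσ
  have hσ_ord := RatFunc.orderOf_eq_of_apply_X_eq_X_add_C hp one_ne_zero hσ
  have hρ_ord : orderOf ρ = p - 1 :=
    (RatFunc.orderOf_eq_orderOf_of_apply_X_eq_C_mul_X hρ).trans hζ.inv.eq_orderOf.symm
  set y : RatFunc k := (RatFunc.X ^ p - RatFunc.X) ^ (p - 1)
  have hfinrank : finrank k⟮y⟯ (RatFunc k) = p * (p - 1) :=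
    RatFunc.finrank_adjoin_X_pow_sub_X_pow hp1 (p - 1)
  have : FiniteDimensional k⟮y⟯ (RatFunc k) :=
    Module.finite_of_finrank_pos (by rw [hfinrank]; exact Nat.mul_pos (by omega) (by omega))
  have hy : k⟮y⟯ ≤ fixedField (Subgroup.closure {σ, ρ}) := by
    refine adjoin_simple_le_iff.mpr (mem_fixedField_closure_iff.mpr ?_)
    rintro g (rfl | rfl)
    · rw [map_pow, RatFunc.apply_X_pow_sub_X_of_apply_X_eq_X_add_C hp (one_pow p) hσ]
    · exact RatFunc.apply_X_pow_sub_X_pow_of_apply_X_eq_C_mul_X (by omega) hζ.inv.pow_eq_one hρ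
  have := finite_of_le_fixedField hy
  have hdvd : p * (p - 1) ∣ Nat.card (Subgroup.closure {σ, ρ}) := by
    have hcop : p.Coprime (p - 1) :=
      (Nat.coprime_self_sub_right hp1.le).mpr (Nat.coprime_one_right p)
    rw [← hρ_ord, ← hσ_ord] at hcop ⊢
    exact Subgroup.mul_dvd_natCard_closure_pair hcop
  have hfix := fixedField_eq_of_le_of_finrank_le hy (hfinrank ▸ Nat.le_of_dvd Nat.card_pos hdvd)
  have hζ_inv : ζ⁻¹ ≠ 0 := inv_ne_zero (hζ.ne_zero (by omega))
  refine ⟨by simpa using RatFunc.conj_apply_X_of_apply_X_eq hζ_inv hσ hρ, ?_, hfix⟩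
  rw [← finrank_fixedField_eq_natCard, hfix, hfinrank]
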